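/- If there exists a reconfiguration sequence from p_b to p_e in G_φ of length at most 2m(n+2), then the formula φ is satisfiable; indeed, the assignment θ that gives each variable x_i the common v-state of the level-i gadget vertices visited by such a sequence satisfies φ. -/
import Mathlib


/-- Vertices of the graph `G_φ` (for a CNF formula with `n` variables and `m` clauses):
`s`, `t`, the vertices `beg_{j+1}` and `end_{j+1}` (for `j : Fin (2m)`), and the gadget
vertices `v(i+1, vs, cs, j+1)` (for `i : Fin n`, `vs cs : Bool`, `j : Fin (2m)`).
An index `i : Fin n` encodes level `i+1`, and `j : Fin (2m)` encodes depth `j+1`. -/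
inductive PVert (n m : ℕ) : Type where
  | s : PVert n m
  | t : PVert n m
  | beg (j : Fin (2 * m)) : PVert n m
  | en (j : Fin (2 * m)) : PVert n m
  | v (i : Fin n) (vs : Bool) (cs : Bool) (j : Fin (2 * m)) : PVert n m
deriving DecidableEq

/-- The depth of a vertex of `G_φ`. -/
def PVert.depth {n m : ℕ} : PVert n m → ℕ
  | PVert.s => 0
  | PVert.t => 2 * m + 1
  | PVert.beg j => (j : ℕ) + 1
  | PVert.en j => (j : ℕ) + 1
  | PVert.v _ _ _ j => (j : ℕ) + 1

/-- The level of a vertex of `G_φ` (`beg`-vertices have level `0`, `end`-vertices have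
level `n+1`, the gadget vertex `v(i,vs,cs,j)` has level `i`; junk value `0` for `s`,`t`). -/
def PVert.level {n m : ℕ} : PVert n m → ℕ
  | PVert.beg _ => 0
  | PVert.en _ => n + 1
  | PVert.v i _ _ _ => (i : ℕ) + 1
  | _ => 0

/-- The c-state of a vertex of `G_φ` (`beg`-vertices have c-state `0`, `end`-vertices have
c-state `1`, the gadget vertex `v(i,vs,cs,j)` has c-state `cs`; junk value `0` for `s`,`t`). -/
def PVert.cstate {n m : ℕ} : PVert n m → ℕ
  | PVert.beg _ => 0
  | PVert.en _ => 1
  | PVert.v _ _ cs _ => cond cs 1 0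
  | _ => 0

/-- The (directed) edges of `G_φ`.  The CNF formula `φ` is recorded by its clauses:
`(i, vs) ∈ φ jc` means that clause `C_{jc+1}` contains the literal asserting `x_{i+1} = vs`,
i.e. that setting `x_{i+1} = vs` satisfies clause `C_{jc+1}`. -/
def PEdge (n m : ℕ) (φ : Fin m → Finset (Fin n × Bool)) (a b : PVert n m) : Prop :=
  -- (a) gadget edges, same c-state: from depth j to depth j+1 inside a gadget
  (∃ (i : Fin n) (vs cs : Bool) (j j' : Fin (2 * m)), (j' : ℕ) = (j : ℕ) + 1 ∧
      a = PVert.v i vs cs j ∧ b = PVert.v i vs cs j') ∨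
  -- (a) gadget edges, crossing: from even depth 2j to odd depth 2j+1, flipping the c-state
  (∃ (i : Fin n) (vs cs : Bool) (j j' : Fin (2 * m)), (j' : ℕ) = (j : ℕ) + 1 ∧
      (j : ℕ) % 2 = 1 ∧ a = PVert.v i vs cs j ∧ b = PVert.v i vs (!cs) j') ∨
  -- (b) formula edges: from v(i,vs,1,2jc-1) to v(i,vs,0,2jc) when x_i = vs satisfies C_jc
  (∃ (i : Fin n) (vs : Bool) (j j' : Fin (2 * m)) (jc : Fin m), (j' : ℕ) = (j : ℕ) + 1 ∧
      (j : ℕ) = 2 * (jc : ℕ) ∧ (i, vs) ∈ φ jc ∧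
      a = PVert.v i vs true j ∧ b = PVert.v i vs false j') ∨
  -- (c) inter-level edges, same c-state: from level i+1, depth j-1 to level i, depth j
  (∃ (ihi ilo : Fin n) (vs' vs cs : Bool) (j j' : Fin (2 * m)), (ihi : ℕ) = (ilo : ℕ) + 1 ∧
      (j' : ℕ) = (j : ℕ) + 1 ∧ a = PVert.v ihi vs' cs j ∧ b = PVert.v ilo vs cs j') ∨
  -- (c) inter-level edges, crossing: from level i+1, even depth 2j to level i, depth 2j+1
  (∃ (ihi ilo : Fin n) (vs' vs cs : Bool) (j j' : Fin (2 * m)), (ihi : ℕ) = (ilo : ℕ) + 1 ∧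
      (j' : ℕ) = (j : ℕ) + 1 ∧ (j : ℕ) % 2 = 1 ∧
      a = PVert.v ihi vs' cs j ∧ b = PVert.v ilo vs (!cs) j') ∨
  -- (d) the begin path
  (∃ (j j' : Fin (2 * m)), (j' : ℕ) = (j : ℕ) + 1 ∧ a = PVert.beg j ∧ b = PVert.beg j') ∨
  -- (d) the end path
  (∃ (j j' : Fin (2 * m)), (j' : ℕ) = (j : ℕ) + 1 ∧ a = PVert.en j ∧ b = PVert.en j') ∨
  -- (d) from v(1,vs,0,j) to beg_{j+1}
  (∃ (i : Fin n) (vs : Bool) (j j' : Fin (2 * m)), (i : ℕ) = 0 ∧ (j' : ℕ) = (j : ℕ) + 1 ∧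
      a = PVert.v i vs false j ∧ b = PVert.beg j') ∨
  -- (d) from end_j to v(n,vs,1,j+1)
  (∃ (i : Fin n) (vs : Bool) (j j' : Fin (2 * m)), (i : ℕ) + 1 = n ∧ (j' : ℕ) = (j : ℕ) + 1 ∧
      a = PVert.en j ∧ b = PVert.v i vs true j') ∨
  -- edges from s to every vertex of depth 1
  (a = PVert.s ∧ b.depth = 1) ∨
  -- edges from every vertex of depth 2m to t
  (a.depth = 2 * m ∧ b = PVert.t)

/-- A shortest `(s,t)`-path in `G_φ`: a directed path from `s` to `t` with `2m+2` vertices,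
one vertex of each depth `0, 1, …, 2m+1`. -/
def IsStPath (n m : ℕ) (φ : Fin m → Finset (Fin n × Bool))
    (p : Fin (2 * m + 1 + 1) → PVert n m) : Prop :=
  p 0 = PVert.s ∧ p (Fin.last (2 * m + 1)) = PVert.t ∧
    (∀ i : Fin (2 * m + 1), PEdge n m φ (p i.castSucc) (p i.succ)) ∧
    (∀ d : Fin (2 * m + 1 + 1), (p d).depth = (d : ℕ))

/-- Two vertex sequences differ in exactly one position. -/
def DiffOne {N : ℕ} {α : Type*} (p q : Fin N → α) : Prop :=
  ∃ i, p i ≠ q i ∧ ∀ j, j ≠ i → p j = q j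

/-- `ρ 0, ρ 1, …, ρ ℓ` is a reconfiguration sequence of length `ℓ` from the shortest
`(s,t)`-path `p` to the shortest `(s,t)`-path `q` in `G_φ`. -/
def PReconfSeq (n m : ℕ) (φ : Fin m → Finset (Fin n × Bool))
    (ρ : ℕ → (Fin (2 * m + 1 + 1) → PVert n m)) (ℓ : ℕ)
    (p q : Fin (2 * m + 1 + 1) → PVert n m) : Prop :=
  ρ 0 = p ∧ ρ ℓ = q ∧ (∀ i ≤ ℓ, IsStPath n m φ (ρ i)) ∧
    ∀ i < ℓ, DiffOne (ρ i) (ρ (i + 1))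

/-- The path `p_b = (s, beg_1, …, beg_{2m}, t)`. -/
def pbP (n m : ℕ) : Fin (2 * m + 1 + 1) → PVert n m := fun d =>
  if h0 : (d : ℕ) = 0 then PVert.s
  else if h1 : (d : ℕ) ≤ 2 * m then PVert.beg ⟨(d : ℕ) - 1, by omega⟩
  else PVert.t

/-- The path `p_e = (s, end_1, …, end_{2m}, t)`. -/
def peP (n m : ℕ) : Fin (2 * m + 1 + 1) → PVert n m := fun d =>
  if h0 : (d : ℕ) = 0 then PVert.s
  else if h1 : (d : ℕ) ≤ 2 * m then PVert.en ⟨(d : ℕ) - 1, by omega⟩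
  else PVert.t

namespace Stmt6
variable {n m : ℕ}

/-- weight of a vertex -/
def vW (x : PVert n m) : ℕ := x.level + x.cstate

lemma lev_v (i : Fin n) (vs cs : Bool) (j : Fin (2*m)) :
    (PVert.v i vs cs j).level = (i:ℕ)+1 := rfl
lemma lev_beg (j : Fin (2*m)) : (PVert.beg (n:=n) j).level = 0 := rfl
lemma lev_en (j : Fin (2*m)) : (PVert.en (n:=n) (m:=m) j).level = n+1 := rfl
lemma cst_v (i : Fin n) (vs cs : Bool) (j : Fin (2*m)) :
    (PVert.v i vs cs j).cstate = cond cs 1 0 := rfl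
lemma cst_beg (j : Fin (2*m)) : (PVert.beg (n:=n) j).cstate = 0 := rfl
lemma cst_en (j : Fin (2*m)) : (PVert.en (n:=n) (m:=m) j).cstate = 1 := rfl

/-- same-weight classes for odd edges -/
def SameC (a b : PVert n m) : Prop :=
  (∃ i vs cs j j', a = PVert.v i vs cs j ∧ b = PVert.v i vs cs j') ∨
  (∃ j j', a = PVert.beg j ∧ b = PVert.beg j') ∨
  (∃ j j', a = PVert.en j ∧ b = PVert.en j')

/-- weight-drop classes for odd edges -/
def DropC (φ : Fin m → Finset (Fin n × Bool)) (k : ℕ) (a b : PVert n m) : Prop :=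
  (∃ (i : Fin n) (vs : Bool) (j j' : Fin (2*m)) (hk : k < m), (i, vs) ∈ φ ⟨k, hk⟩ ∧
      a = PVert.v i vs true j ∧ b = PVert.v i vs false j') ∨
  (∃ (ihi ilo : Fin n) (vs' vs : Bool) (cs : Bool) (j j' : Fin (2*m)),
      (ihi : ℕ) = (ilo : ℕ) + 1 ∧ a = PVert.v ihi vs' cs j ∧ b = PVert.v ilo vs cs j') ∨
  (∃ (j : Fin (2*m)) (i : Fin n) (vs : Bool) (j' : Fin (2*m)), (i : ℕ) + 1 = n ∧
      a = PVert.en j ∧ b = PVert.v i vs true j') ∨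
  (∃ (i : Fin n) (vs : Bool) (j j' : Fin (2*m)), (i : ℕ) = 0 ∧
      a = PVert.v i vs false j ∧ b = PVert.beg j')

lemma sameC_lev {a b : PVert n m} (h : SameC a b) : a.level = b.level := by
  rcases h with ⟨i,vs,cs,j,j',ha,hb⟩|⟨j,j',ha,hb⟩|⟨j,j',ha,hb⟩ <;> subst ha <;> subst hb <;>
    simp [PVert.level]

lemma sameC_cst {a b : PVert n m} (h : SameC a b) : a.cstate = b.cstate := by
  rcases h with ⟨i,vs,cs,j,j',ha,hb⟩|⟨j,j',ha,hb⟩|⟨j,j',ha,hb⟩ <;> subst ha <;> subst hb <;>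
    simp [PVert.cstate]

lemma sameC_W {a b : PVert n m} (h : SameC a b) : vW a = vW b := by
  unfold vW; rw [sameC_lev h, sameC_cst h]

lemma dropC_W {φ : Fin m → Finset (Fin n × Bool)} {k : ℕ} {a b : PVert n m}
    (h : DropC φ k a b) : vW a = vW b + 1 := by
  rcases h with ⟨i,vs,j,j',hk,hmem,ha,hb⟩|⟨ihi,ilo,vs',vs,cs,j,j',hio,ha,hb⟩|
    ⟨j,i,vs,j',hin,ha,hb⟩|⟨i,vs,j,j',hi0,ha,hb⟩ <;> subst ha <;> subst hb <;>
    simp [vW, PVert.level, PVert.cstate] <;> first | (cases cs <;> simp <;> omega) | omega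

lemma dropC_lev {φ : Fin m → Finset (Fin n × Bool)} {k : ℕ} {a b : PVert n m}
    (h : DropC φ k a b) : b.level ≤ a.level ∧ a.level ≤ b.level + 1 := by
  rcases h with ⟨i,vs,j,j',hk,hmem,ha,hb⟩|⟨ihi,ilo,vs',vs,cs,j,j',hio,ha,hb⟩|
    ⟨j,i,vs,j',hin,ha,hb⟩|⟨i,vs,j,j',hi0,ha,hb⟩ <;> subst ha <;> subst hb <;>
    simp [PVert.level] <;> omega

/-- classification of edges from an odd depth `2k+1` to `2k+2 ≤ 2m` -/
lemma L_odd {φ : Fin m → Finset (Fin n × Bool)} {a b : PVert n m} {k : ℕ}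
    (hk2 : 2*k+2 ≤ 2*m) (ha : a.depth = 2*k+1) (hb : b.depth = 2*k+2)
    (h : PEdge n m φ a b) : SameC a b ∨ DropC φ k a b := by
  rcases h with ⟨i,vs,cs,j,j',hj,h1,h2⟩|⟨i,vs,cs,j,j',hj,hp,h1,h2⟩|
    ⟨i,vs,j,j',jc,hj,hjc,hmem,h1,h2⟩|⟨ihi,ilo,vs',vs,cs,j,j',hio,hj,h1,h2⟩|
    ⟨ihi,ilo,vs',vs,cs,j,j',hio,hj,hp,h1,h2⟩|⟨j,j',hj,h1,h2⟩|⟨j,j',hj,h1,h2⟩|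
    ⟨i,vs,j,j',hi0,hj,h1,h2⟩|⟨i,vs,j,j',hin,hj,h1,h2⟩|⟨h1,h2⟩|⟨h1,h2⟩
  · exact Or.inl (Or.inl ⟨i,vs,cs,j,j',h1,h2⟩)
  · subst h1; simp [PVert.depth] at ha; omega
  · subst h1; subst h2
    simp [PVert.depth] at ha
    have hkjc : (jc : ℕ) = k := by omega
    refine Or.inr (Or.inl ⟨i, vs, j, j', by omega, ?_, rfl, rfl⟩)
    have : (⟨k, by omega⟩ : Fin m) = jc := by ext; simpa using hkjc.symm
    rw [this]; exact hmem
  · exact Or.inr (Or.inr (Or.inl ⟨ihi,ilo,vs',vs,cs,j,j',hio,h1,h2⟩))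
  · subst h1; simp [PVert.depth] at ha; omega
  · exact Or.inl (Or.inr (Or.inl ⟨j,j',h1,h2⟩))
  · exact Or.inl (Or.inr (Or.inr ⟨j,j',h1,h2⟩))
  · exact Or.inr (Or.inr (Or.inr (Or.inr ⟨i,vs,j,j',hi0,h1,h2⟩)))
  · exact Or.inr (Or.inr (Or.inr (Or.inl ⟨j,i,vs,j',hin,h1,h2⟩)))
  · subst h1; simp [PVert.depth] at ha
  · subst h2; simp [PVert.depth] at hb; omega

end Stmt6
namespace Stmt6
variable {n m : ℕ}

/-- classification of edges from an even depth `2k ≥ 2` to `2k+1 ≤ 2m` -/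
lemma L_even {φ : Fin m → Finset (Fin n × Bool)} {a b : PVert n m} {k : ℕ} (hk : 1 ≤ k)
    (hk2 : 2*k+1 ≤ 2*m) (ha : a.depth = 2*k) (hb : b.depth = 2*k+1)
    (h : PEdge n m φ a b) :
    (∃ i vs cs j j', a = PVert.v i vs cs j ∧ b = PVert.v i vs cs j') ∨
    (∃ i vs cs j j', a = PVert.v i vs cs j ∧ b = PVert.v i vs (!cs) j') ∨
    (∃ (ihi ilo : Fin n) (vs' vs cs cs' : Bool) (j j' : Fin (2*m)),
        (ihi : ℕ) = (ilo : ℕ) + 1 ∧ a = PVert.v ihi vs' cs j ∧ b = PVert.v ilo vs cs' j') ∨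
    (∃ j j', a = PVert.beg j ∧ b = PVert.beg j') ∨
    (∃ j j', a = PVert.en j ∧ b = PVert.en j') ∨
    (∃ (j : Fin (2*m)) (i : Fin n) (vs : Bool) (j' : Fin (2*m)), (i : ℕ) + 1 = n ∧
        a = PVert.en j ∧ b = PVert.v i vs true j') ∨
    (∃ (i : Fin n) (vs : Bool) (j j' : Fin (2*m)), (i : ℕ) = 0 ∧
        a = PVert.v i vs false j ∧ b = PVert.beg j') := by
  rcases h with ⟨i,vs,cs,j,j',hj,h1,h2⟩|⟨i,vs,cs,j,j',hj,hp,h1,h2⟩|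
    ⟨i,vs,j,j',jc,hj,hjc,hmem,h1,h2⟩|⟨ihi,ilo,vs',vs,cs,j,j',hio,hj,h1,h2⟩|
    ⟨ihi,ilo,vs',vs,cs,j,j',hio,hj,hp,h1,h2⟩|⟨j,j',hj,h1,h2⟩|⟨j,j',hj,h1,h2⟩|
    ⟨i,vs,j,j',hi0,hj,h1,h2⟩|⟨i,vs,j,j',hin,hj,h1,h2⟩|⟨h1,h2⟩|⟨h1,h2⟩
  · exact Or.inl ⟨i,vs,cs,j,j',h1,h2⟩
  · exact Or.inr (Or.inl ⟨i,vs,cs,j,j',h1,h2⟩)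
  · subst h1; simp [PVert.depth] at ha; omega
  · exact Or.inr (Or.inr (Or.inl ⟨ihi,ilo,vs',vs,cs,cs,j,j',hio,h1,h2⟩))
  · exact Or.inr (Or.inr (Or.inl ⟨ihi,ilo,vs',vs,cs,!cs,j,j',hio,h1,h2⟩))
  · exact Or.inr (Or.inr (Or.inr (Or.inl ⟨j,j',h1,h2⟩)))
  · exact Or.inr (Or.inr (Or.inr (Or.inr (Or.inl ⟨j,j',h1,h2⟩))))
  · exact Or.inr (Or.inr (Or.inr (Or.inr (Or.inr (Or.inr ⟨i,vs,j,j',hi0,h1,h2⟩)))))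
  · exact Or.inr (Or.inr (Or.inr (Or.inr (Or.inr (Or.inl ⟨j,i,vs,j',hin,h1,h2⟩)))))
  · subst h1; simp [PVert.depth] at ha; omega
  · subst h2; simp [PVert.depth] at hb; omega

/-- levels never increase along any edge between depths in `[1, 2m]` -/
lemma L_lev {φ : Fin m → Finset (Fin n × Bool)} {a b : PVert n m}
    (ha1 : 1 ≤ a.depth) (hb2 : b.depth ≤ 2*m)
    (h : PEdge n m φ a b) : b.level ≤ a.level := by
  rcases h with ⟨i,vs,cs,j,j',hj,h1,h2⟩|⟨i,vs,cs,j,j',hj,hp,h1,h2⟩|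
    ⟨i,vs,j,j',jc,hj,hjc,hmem,h1,h2⟩|⟨ihi,ilo,vs',vs,cs,j,j',hio,hj,h1,h2⟩|
    ⟨ihi,ilo,vs',vs,cs,j,j',hio,hj,hp,h1,h2⟩|⟨j,j',hj,h1,h2⟩|⟨j,j',hj,h1,h2⟩|
    ⟨i,vs,j,j',hi0,hj,h1,h2⟩|⟨i,vs,j,j',hin,hj,h1,h2⟩|⟨h1,h2⟩|⟨h1,h2⟩ <;>
    first
    | (subst h1; subst h2; simp only [PVert.level]; omega)
    | (subst h1; simp [PVert.depth] at ha1)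
    | (subst h2; simp only [PVert.depth] at hb2; omega)

/-- shape of a vertex of depth in `[1, 2m]` -/
lemma depth_shape (x : PVert n m) (h1 : 1 ≤ x.depth) (h2 : x.depth ≤ 2*m) :
    (∃ j, x = PVert.beg j) ∨ (∃ j, x = PVert.en j) ∨ (∃ i vs cs j, x = PVert.v i vs cs j) := by
  cases x with
  | s => simp [PVert.depth] at h1
  | t => simp only [PVert.depth] at h2; omega
  | beg j => exact Or.inl ⟨j, rfl⟩
  | en j => exact Or.inr (Or.inl ⟨j, rfl⟩)
  | v i vs cs j => exact Or.inr (Or.inr ⟨i, vs, cs, j, rfl⟩)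

section Path
variable {φ : Fin m → Finset (Fin n × Bool)} {p : Fin (2*m+1+1) → PVert n m}

lemma path_depth (hp : IsStPath n m φ p) (d : Fin (2*m+1+1)) : (p d).depth = (d : ℕ) :=
  hp.2.2.2 d

lemma path_edge (hp : IsStPath n m φ p) (d : ℕ) (hd : d < 2*m+1) :
    PEdge n m φ (p ⟨d, by omega⟩) (p ⟨d+1, by omega⟩) := by
  have := hp.2.2.1 ⟨d, hd⟩
  have e1 : (Fin.castSucc ⟨d, hd⟩ : Fin (2*m+1+1)) = ⟨d, by omega⟩ := rfl
  have e2 : (Fin.succ ⟨d, hd⟩ : Fin (2*m+1+1)) = ⟨d+1, by omega⟩ := rfl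
  rwa [e1, e2] at this

end Path
end Stmt6
namespace Stmt6
variable {n m : ℕ} {φ : Fin m → Finset (Fin n × Bool)}

/-- total weight of a path -/
def Wp (p : Fin (2*m+1+1) → PVert n m) : ℕ := ∑ d : Fin (2*m+1+1), vW (p d)

lemma Wp_pb : Wp (pbP n m) = 0 := by
  apply Finset.sum_eq_zero
  intro d _
  unfold pbP vW
  split_ifs <;> simp [PVert.level, PVert.cstate]

lemma Wp_pe : Wp (peP n m) = 2*m*(n+2) := by
  have h : ∀ d : Fin (2*m+1+1), vW (peP n m d) =
      (if (d:ℕ) = 0 then 0 else if (d:ℕ) ≤ 2*m then n+2 else 0) := by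
    intro d
    unfold peP vW
    split_ifs <;> simp [PVert.level, PVert.cstate]
  have hs : Wp (peP n m) = ∑ d : Fin (2*m+1+1),
      (fun x : ℕ => if x = 0 then 0 else if x ≤ 2*m then n+2 else 0) (d : ℕ) :=
    Finset.sum_congr rfl (fun d _ => h d)
  rw [hs, Fin.sum_univ_eq_sum_range
    (fun x : ℕ => if x = 0 then 0 else if x ≤ 2*m then n+2 else 0)]
  rw [Finset.sum_range_succ, Finset.sum_range_succ']
  have h1 : ∀ i ∈ Finset.range (2*m),
      (fun x : ℕ => if x = 0 then 0 else if x ≤ 2*m then n+2 else 0) (i+1) = n+2 := by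
    intro i hi
    rw [Finset.mem_range] at hi
    simp only
    rw [if_neg (by omega), if_pos (by omega)]
  rw [Finset.sum_congr rfl h1, Finset.sum_const, Finset.card_range, smul_eq_mul]
  simp only
  rw [if_pos trivial, if_neg (by omega : ¬(2*m+1 = 0)), if_neg (by omega : ¬(2*m+1 ≤ 2*m))]
  ring

lemma Wp_diff {p q : Fin (2*m+1+1) → PVert n m} (i0 : Fin (2*m+1+1))
    (hoth : ∀ j ≠ i0, p j = q j) : Wp p + vW (q i0) = Wp q + vW (p i0) := by
  unfold Wp
  rw [← Finset.add_sum_erase _ _ (Finset.mem_univ i0),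
      ← Finset.add_sum_erase _ (fun d => vW (q d)) (Finset.mem_univ i0)]
  have : ∑ x ∈ Finset.univ.erase i0, vW (p x) = ∑ x ∈ Finset.univ.erase i0, vW (q x) := by
    apply Finset.sum_congr rfl
    intro x hx
    rw [hoth x (Finset.ne_of_mem_erase hx)]
  omega

/-- the key step bound: a single reconfiguration step increases `Wp` by at most 1 -/
lemma step_W {p q : Fin (2*m+1+1) → PVert n m} (hp : IsStPath n m φ p)
    (hq : IsStPath n m φ q) (hd : DiffOne p q) : Wp q ≤ Wp p + 1 := by
  obtain ⟨i0, hne, hoth⟩ := hd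
  obtain ⟨d, hdlt⟩ := i0
  have hsum := Wp_diff (p := p) (q := q) ⟨d, hdlt⟩ (fun j hj => hoth j hj)
  have hd0 : d ≠ 0 := by
    intro h; subst h
    exact hne (hp.1.trans hq.1.symm)
  have hdtop : d ≠ 2*m+1 := by
    intro h
    apply hne
    have e : (⟨d, hdlt⟩ : Fin (2*m+1+1)) = Fin.last (2*m+1) := by
      apply Fin.ext; simp [h, Fin.last]
    rw [e, hp.2.1, hq.2.1]
  suffices h : vW (q ⟨d, hdlt⟩) ≤ vW (p ⟨d, hdlt⟩) + 1 by omega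
  clear hsum
  rcases Nat.even_or_odd d with he | ho
  · -- even position: use the edge from the common left neighbour
    obtain ⟨e, rfl⟩ : ∃ e, d = e + 1 := ⟨d - 1, by omega⟩
    have he1 : e < 2*m+1+1 := by omega
    have hep : PEdge n m φ (p ⟨e, he1⟩) (p ⟨e+1, hdlt⟩) := path_edge hp e (by omega)
    have heq : PEdge n m φ (q ⟨e, he1⟩) (q ⟨e+1, hdlt⟩) := path_edge hq e (by omega)
    have haq : p ⟨e, he1⟩ = q ⟨e, he1⟩ := by
      apply hoth; simp [Fin.ext_iff]
    rw [← haq] at heq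
    obtain ⟨k, hk⟩ : ∃ k, e = 2*k+1 := by
      rcases he with ⟨r, hr⟩; exact ⟨r - 1, by omega⟩
    have ha0 : (p ⟨e, he1⟩).depth = e := path_depth hp ⟨e, he1⟩
    have hb0 : (p ⟨e+1, hdlt⟩).depth = e+1 := path_depth hp ⟨e+1, hdlt⟩
    have hb0' : (q ⟨e+1, hdlt⟩).depth = e+1 := path_depth hq ⟨e+1, hdlt⟩
    have h1 := L_odd (φ := φ) (k := k) (by omega) (by omega) (by omega) hep
    have h2 := L_odd (φ := φ) (k := k) (by omega) (by omega) (by omega) heq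
    rcases h1 with h1 | h1 <;> rcases h2 with h2 | h2 <;>
      [ (have e1 := sameC_W h1; have e2 := sameC_W h2);
        (have e1 := sameC_W h1; have e2 := dropC_W h2);
        (have e1 := dropC_W h1; have e2 := sameC_W h2);
        (have e1 := dropC_W h1; have e2 := dropC_W h2)] <;> omega
  · -- odd position: use the edge to the common right neighbour
    obtain ⟨k, hk⟩ := ho
    have hd1 : d+1 < 2*m+1+1 := by omega
    have hd2m : d + 1 ≤ 2*m := by omega
    have hep : PEdge n m φ (p ⟨d, hdlt⟩) (p ⟨d+1, hd1⟩) := path_edge hp d (by omega)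
    have heq : PEdge n m φ (q ⟨d, hdlt⟩) (q ⟨d+1, hd1⟩) := path_edge hq d (by omega)
    have hbq : p ⟨d+1, hd1⟩ = q ⟨d+1, hd1⟩ := by
      apply hoth; simp [Fin.ext_iff]
    rw [← hbq] at heq
    have ha0 : (p ⟨d, hdlt⟩).depth = d := path_depth hp ⟨d, hdlt⟩
    have ha0' : (q ⟨d, hdlt⟩).depth = d := path_depth hq ⟨d, hdlt⟩
    have hb0 : (p ⟨d+1, hd1⟩).depth = d+1 := path_depth hp ⟨d+1, hd1⟩
    have h1 := L_odd (φ := φ) (k := k) (by omega) (by omega) (by omega) hep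
    have h2 := L_odd (φ := φ) (k := k) (by omega) (by omega) (by omega) heq
    rcases h1 with h1 | h1 <;> rcases h2 with h2 | h2 <;>
      [ (have e1 := sameC_W h1; have e2 := sameC_W h2);
        (have e1 := sameC_W h1; have e2 := dropC_W h2);
        (have e1 := dropC_W h1; have e2 := sameC_W h2);
        (have e1 := dropC_W h1; have e2 := dropC_W h2)] <;> omega

section Reconf
variable {ℓ : ℕ} {ρ : ℕ → (Fin (2*m+1+1) → PVert n m)}

lemma W_incr (hρ : PReconfSeq n m φ ρ ℓ (pbP n m) (peP n m)) {s t : ℕ} (hst : s ≤ t)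
    (htℓ : t ≤ ℓ) : Wp (ρ t) ≤ Wp (ρ s) + (t - s) := by
  induction t, hst using Nat.le_induction with
  | base => simp
  | succ t hst ih =>
    have h1 := ih (by omega)
    have h2 := step_W (hρ.2.2.1 t (by omega)) (hρ.2.2.1 (t+1) htℓ) (hρ.2.2.2 t (by omega))
    omega

lemma W_exact (hρ : PReconfSeq n m φ ρ ℓ (pbP n m) (peP n m)) (hℓ : ℓ ≤ 2*m*(n+2))
    {t : ℕ} (ht : t ≤ ℓ) : Wp (ρ t) = t := by
  have h0 : Wp (ρ 0) = 0 := by rw [hρ.1, Wp_pb]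
  have hl : Wp (ρ ℓ) = 2*m*(n+2) := by rw [hρ.2.1, Wp_pe]
  have h1 := W_incr hρ (Nat.zero_le t) ht
  have h2 := W_incr hρ ht le_rfl
  omega

/-- rigidity: each step increases the weight of the changed position by exactly 1 -/
lemma rig (hρ : PReconfSeq n m φ ρ ℓ (pbP n m) (peP n m)) (hℓ : ℓ ≤ 2*m*(n+2))
    {t : ℕ} (ht : t < ℓ) (pos : Fin (2*m+1+1)) (hne : ρ (t+1) pos ≠ ρ t pos) :
    vW (ρ (t+1) pos) = vW (ρ t pos) + 1 := by
  obtain ⟨i0, hi0ne, hoth⟩ := hρ.2.2.2 t ht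
  have hpos : pos = i0 := by
    by_contra h
    exact hne (hoth pos h).symm
  subst hpos
  have hsum := Wp_diff (p := ρ t) (q := ρ (t+1)) pos (fun j hj => hoth j hj)
  have e1 := W_exact hρ hℓ (t := t) (by omega)
  have e2 := W_exact hρ hℓ (t := t+1) (by omega)
  omega

end Reconf
end Stmt6
namespace Stmt6
variable {n m : ℕ} {φ : Fin m → Finset (Fin n × Bool)}

/-- if a change at an odd position `2k+1 ≥ 3` raises the level, the new gadget vertex
inherits its (level, v-state) from the left neighbour -/
lemma G3odd {a' a₀ b₀ : PVert n m} {k : ℕ} (hk : 1 ≤ k) (hk2 : 2*k+1 ≤ 2*m)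
    (hda' : a'.depth = 2*k) (hda : a₀.depth = 2*k+1) (hdb : b₀.depth = 2*k+1)
    (E1 : PEdge n m φ a' a₀) (E2 : PEdge n m φ a' b₀)
    (hlev : b₀.level = a₀.level + 1)
    {i : Fin n} {vs cs : Bool} {j : Fin (2*m)} (hb : b₀ = PVert.v i vs cs j) :
    ∃ cs' j', a' = PVert.v i vs cs' j' := by
  subst hb
  rcases L_even (φ := φ) hk hk2 hda' hdb E2 with
    ⟨i1,vs1,cs1,j1,j1',h1,h2⟩|⟨i1,vs1,cs1,j1,j1',h1,h2⟩|
    ⟨ihi,ilo,vs1,vs2,cs1,cs2,j1,j1',hio,h1,h2⟩|⟨j1,j1',h1,h2⟩|⟨j1,j1',h1,h2⟩|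
    ⟨j1,i1,vs1,j1',hin,h1,h2⟩|⟨i1,vs1,j1,j1',hi0,h1,h2⟩
  · injection h2 with a b c d
    subst a; subst b
    exact ⟨cs1, j1, h1⟩
  · injection h2 with a b c d
    subst a; subst b
    exact ⟨cs1, j1, h1⟩
  · -- inter-level into b₀: impossible given the level increase, by inspecting E1
    exfalso
    injection h2 with a b c d
    subst a; subst b; subst h1
    rcases L_even (φ := φ) hk hk2 hda' hda E1 with
      ⟨i2,vs3,cs3,j2,j2',h3,h4⟩|⟨i2,vs3,cs3,j2,j2',h3,h4⟩|
      ⟨ihi2,ilo2,vs3,vs4,cs3,cs4,j2,j2',hio2,h3,h4⟩|⟨j2,j2',h3,h4⟩|⟨j2,j2',h3,h4⟩|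
      ⟨j2,i2,vs3,j2',hin2,h3,h4⟩|⟨i2,vs3,j2,j2',hi02,h3,h4⟩ <;>
      [ skip; skip; skip; (exact absurd h3 (by simp)); (exact absurd h3 (by simp));
        (exact absurd h3 (by simp)); skip ]
    · injection h3 with a b c d
      subst a; subst h4
      simp only [PVert.level] at hlev
      omega
    · injection h3 with a b c d
      subst a; subst h4
      simp only [PVert.level] at hlev
      omega
    · injection h3 with a b c d
      subst a; subst h4
      simp only [PVert.level] at hlev
      omega
    · injection h3 with a b c d
      subst a
      omega
  · exact absurd h2 (by simp)
  · exact absurd h2 (by simp)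
  · -- a' = en: impossible by inspecting E1
    exfalso
    injection h2 with a b c d
    subst a; subst b; subst h1
    rcases L_even (φ := φ) hk hk2 hda' hda E1 with
      ⟨i2,vs3,cs3,j2,j2',h3,h4⟩|⟨i2,vs3,cs3,j2,j2',h3,h4⟩|
      ⟨ihi2,ilo2,vs3,vs4,cs3,cs4,j2,j2',hio2,h3,h4⟩|⟨j2,j2',h3,h4⟩|⟨j2,j2',h3,h4⟩|
      ⟨j2,i2,vs3,j2',hin2,h3,h4⟩|⟨i2,vs3,j2,j2',hi02,h3,h4⟩ <;>
      [ (exact absurd h3 (by simp)); (exact absurd h3 (by simp));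
        (exact absurd h3 (by simp)); (exact absurd h3 (by simp)); skip; skip;
        (exact absurd h3 (by simp)) ]
    · subst h4
      simp only [PVert.level] at hlev
      omega
    · subst h4
      simp only [PVert.level] at hlev
      omega
  · exact absurd h2 (by simp)

end Stmt6
namespace Stmt6
variable {n m : ℕ} {φ : Fin m → Finset (Fin n × Bool)}
  {ℓ : ℕ} {ρ : ℕ → (Fin (2*m+1+1) → PVert n m)}

/-- full classification of a reconfiguration change at position `d` -/
lemma step_classify (hρ : PReconfSeq n m φ ρ ℓ (pbP n m) (peP n m)) (hℓ : ℓ ≤ 2*m*(n+2))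
    {t : ℕ} (ht : t < ℓ) {d : ℕ} (hdlt : d < 2*m+1+1)
    (hne : ρ (t+1) ⟨d, hdlt⟩ ≠ ρ t ⟨d, hdlt⟩) :
    (ρ t ⟨d, hdlt⟩).level ≤ (ρ (t+1) ⟨d, hdlt⟩).level ∧
    (ρ (t+1) ⟨d, hdlt⟩).level ≤ (ρ t ⟨d, hdlt⟩).level + 1 ∧
    ∀ i vs cs j, ρ (t+1) ⟨d, hdlt⟩ = PVert.v i vs cs j →
      (∃ cs' j', ρ t ⟨d, hdlt⟩ = PVert.v i vs cs' j') ∨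
      (2 ≤ d ∧ ∃ (hd' : d-1 < 2*m+1+1), ∃ cs' j', ρ t ⟨d-1, hd'⟩ = PVert.v i vs cs' j') ∨
      (d = 1 ∧ (ρ (t+1) ⟨d, hdlt⟩).level = (ρ t ⟨d, hdlt⟩).level + 1) := by
  have hp := hρ.2.2.1 t (by omega)
  have hq := hρ.2.2.1 (t+1) (by omega)
  have hw := rig hρ hℓ ht ⟨d, hdlt⟩ hne
  obtain ⟨i0, hi0ne, hoth⟩ := hρ.2.2.2 t ht
  have hpos : (⟨d, hdlt⟩ : Fin (2*m+1+1)) = i0 := by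
    by_contra h
    exact hne (hoth _ h).symm
  have hd0 : d ≠ 0 := by
    intro h; subst h
    exact hne ((hq.1).trans (hp.1).symm)
  have hdtop : d ≠ 2*m+1 := by
    intro h
    apply hne
    have e : (⟨d, hdlt⟩ : Fin (2*m+1+1)) = Fin.last (2*m+1) := by
      apply Fin.ext; simp [h, Fin.last]
    rw [e, hq.2.1, hp.2.1]
  rcases Nat.even_or_odd d with heven | hodd
  · -- even position
    obtain ⟨e, rfl⟩ : ∃ e, d = e + 1 := ⟨d - 1, by omega⟩
    have he1 : e < 2*m+1+1 := by omega
    have hep : PEdge n m φ (ρ t ⟨e, he1⟩) (ρ t ⟨e+1, hdlt⟩) := path_edge hp e (by omega)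
    have heq : PEdge n m φ (ρ (t+1) ⟨e, he1⟩) (ρ (t+1) ⟨e+1, hdlt⟩) :=
      path_edge hq e (by omega)
    have haq : ρ t ⟨e, he1⟩ = ρ (t+1) ⟨e, he1⟩ := by
      apply hoth; rw [← hpos]; simp [Fin.ext_iff]
    rw [← haq] at heq
    obtain ⟨k, hk⟩ : ∃ k, e = 2*k+1 := by
      rcases heven with ⟨r, hr⟩; exact ⟨r - 1, by omega⟩
    have ha0 : (ρ t ⟨e, he1⟩).depth = e := path_depth hp ⟨e, he1⟩
    have hb0 : (ρ t ⟨e+1, hdlt⟩).depth = e+1 := path_depth hp ⟨e+1, hdlt⟩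
    have hb0' : (ρ (t+1) ⟨e+1, hdlt⟩).depth = e+1 := path_depth hq ⟨e+1, hdlt⟩
    have h1 := L_odd (φ := φ) (k := k) (by omega) (by omega) (by omega) hep
    have h2 := L_odd (φ := φ) (k := k) (by omega) (by omega) (by omega) heq
    -- kill wrong combinations by weight
    rcases h1 with h1 | h1
    · exfalso
      rcases h2 with h2 | h2
      · have e1 := sameC_W h1; have e2 := sameC_W h2; omega
      · have e1 := sameC_W h1; have e2 := dropC_W h2; omega
    rcases h2 with h2 | h2
    swap
    · exfalso; have e1 := dropC_W h1; have e2 := dropC_W h2; omega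
    -- now h1 : DropC (a' → a₀), h2 : SameC (a' → b₀)
    have hlev1 := sameC_lev h2
    have hlev2 := dropC_lev h1
    refine ⟨by omega, by omega, ?_⟩
    intro i vs cs j hb
    rcases h2 with ⟨i1,vs1,cs1,j1,j1',h3,h4⟩|⟨j1,j1',h3,h4⟩|⟨j1,j1',h3,h4⟩
    · rw [hb] at h4
      injection h4 with a b c dd
      subst a; subst b
      exact Or.inr (Or.inl ⟨by omega, by omega, cs1, j1, by simpa using h3⟩)
    · rw [hb] at h4; exact absurd h4 (by simp)
    · rw [hb] at h4; exact absurd h4 (by simp)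
  · -- odd position
    obtain ⟨k, hk⟩ := hodd
    have hd1 : d+1 < 2*m+1+1 := by omega
    have hep : PEdge n m φ (ρ t ⟨d, hdlt⟩) (ρ t ⟨d+1, hd1⟩) := path_edge hp d (by omega)
    have heq : PEdge n m φ (ρ (t+1) ⟨d, hdlt⟩) (ρ (t+1) ⟨d+1, hd1⟩) :=
      path_edge hq d (by omega)
    have hbq : ρ t ⟨d+1, hd1⟩ = ρ (t+1) ⟨d+1, hd1⟩ := by
      apply hoth; rw [← hpos]; simp [Fin.ext_iff]
    rw [← hbq] at heq
    have ha0 : (ρ t ⟨d, hdlt⟩).depth = d := path_depth hp ⟨d, hdlt⟩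
    have ha0' : (ρ (t+1) ⟨d, hdlt⟩).depth = d := path_depth hq ⟨d, hdlt⟩
    have hb0 : (ρ t ⟨d+1, hd1⟩).depth = d+1 := path_depth hp ⟨d+1, hd1⟩
    have h1 := L_odd (φ := φ) (k := k) (by omega) (by omega) (by omega) hep
    have h2 := L_odd (φ := φ) (k := k) (by omega) (by omega) (by omega) heq
    rcases h1 with h1 | h1
    swap
    · exfalso
      rcases h2 with h2 | h2
      · have e1 := dropC_W h1; have e2 := sameC_W h2; omega
      · have e1 := dropC_W h1; have e2 := dropC_W h2; omega
    rcases h2 with h2 | h2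
    · exfalso; have e1 := sameC_W h1; have e2 := sameC_W h2; omega
    -- now h1 : SameC (a₀ → b'), h2 : DropC (b₀ → b')
    have hlev1 := sameC_lev h1
    have hlev2 := dropC_lev h2
    refine ⟨by omega, by omega, ?_⟩
    intro i vs cs j hb
    rcases h2 with ⟨i1,vs1,j1,j1',hkm,hmem,h3,h4⟩|⟨ihi,ilo,vs1,vs2,cs1,j1,j1',hio,h3,h4⟩|
      ⟨j1,i1,vs1,j1',hin,h3,h4⟩|⟨i1,vs1,j1,j1',hi0,h3,h4⟩
    · -- formula edge: same level, a₀ shares (i, vs) with b'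
      rw [hb] at h3
      injection h3 with a b c dd
      subst a; subst b
      rcases h1 with ⟨i2,vs2,cs2,j2,j2',h5,h6⟩|⟨j2,j2',h5,h6⟩|⟨j2,j2',h5,h6⟩
      · rw [h4] at h6
        injection h6 with a b c dd
        subst a; subst b
        exact Or.inl ⟨cs2, j2, h5⟩
      · rw [h4] at h6; exact absurd h6 (by simp)
      · rw [h4] at h6; exact absurd h6 (by simp)
    · -- inter-level edge: the level goes up
      rw [hb] at h3
      injection h3 with a b c dd
      subst a; subst b
      have hlevup : (ρ (t+1) ⟨d, hdlt⟩).level = (ρ t ⟨d, hdlt⟩).level + 1 := by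
        rw [hb, lev_v]
        rw [h4, lev_v] at hlev1
        omega
      rcases Nat.lt_or_ge d 2 with hd2 | hd2
      · exact Or.inr (Or.inr ⟨by omega, hlevup⟩)
      · -- d = 2k+1 ≥ 3, use the left neighbour
        obtain ⟨k1, hk1⟩ : ∃ k1, k = k1 + 1 := ⟨k - 1, by omega⟩
        have he1 : d - 1 < 2*m+1+1 := by omega
        have hE1 : PEdge n m φ (ρ t ⟨d-1, he1⟩) (ρ t ⟨d, hdlt⟩) := by
          have := path_edge hp (d-1) (by omega)
          have e : ((d-1)+1) = d := by omega
          convert this using 3 <;> omega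
        have hE2 : PEdge n m φ (ρ (t+1) ⟨d-1, he1⟩) (ρ (t+1) ⟨d, hdlt⟩) := by
          have := path_edge hq (d-1) (by omega)
          convert this using 3 <;> omega
        have haq' : ρ t ⟨d-1, he1⟩ = ρ (t+1) ⟨d-1, he1⟩ := by
          apply hoth; rw [← hpos]; simp [Fin.ext_iff]; omega
        rw [← haq'] at hE2
        have hda' : (ρ t ⟨d-1, he1⟩).depth = d-1 := path_depth hp ⟨d-1, he1⟩
        have := G3odd (φ := φ) (k := k) (by omega) (by omega) (by omega) (by omega)
          (by omega) hE1 hE2 hlevup hb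
        obtain ⟨cs', j', hα⟩ := this
        exact Or.inr (Or.inl ⟨by omega, he1, cs', j', hα⟩)
    · rw [hb] at h3; exact absurd h3 (by simp)
    · -- drop to beg : b₀ = v with level 1
      rw [hb] at h3
      injection h3 with a b c dd
      subst a; subst b
      have hlevup : (ρ (t+1) ⟨d, hdlt⟩).level = (ρ t ⟨d, hdlt⟩).level + 1 := by
        rw [hb]
        rcases h1 with ⟨i2,vs2,cs2,j2,j2',h5,h6⟩|⟨j2,j2',h5,h6⟩|⟨j2,j2',h5,h6⟩
        · rw [h4] at h6; exact absurd h6 (by simp)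
        · rw [h5, lev_v, lev_beg]
          omega
        · rw [h4] at h6; exact absurd h6 (by simp)
      rcases Nat.lt_or_ge d 2 with hd2 | hd2
      · exact Or.inr (Or.inr ⟨by omega, hlevup⟩)
      · obtain ⟨k1, hk1⟩ : ∃ k1, k = k1 + 1 := ⟨k - 1, by omega⟩
        have he1 : d - 1 < 2*m+1+1 := by omega
        have hE1 : PEdge n m φ (ρ t ⟨d-1, he1⟩) (ρ t ⟨d, hdlt⟩) := by
          have := path_edge hp (d-1) (by omega)
          convert this using 3 <;> omega
        have hE2 : PEdge n m φ (ρ (t+1) ⟨d-1, he1⟩) (ρ (t+1) ⟨d, hdlt⟩) := by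
          have := path_edge hq (d-1) (by omega)
          convert this using 3 <;> omega
        have haq' : ρ t ⟨d-1, he1⟩ = ρ (t+1) ⟨d-1, he1⟩ := by
          apply hoth; rw [← hpos]; simp [Fin.ext_iff]; omega
        rw [← haq'] at hE2
        have hda' : (ρ t ⟨d-1, he1⟩).depth = d-1 := path_depth hp ⟨d-1, he1⟩
        have := G3odd (φ := φ) (k := k) (by omega) (by omega) (by omega) (by omega)
          (by omega) hE1 hE2 hlevup hb
        obtain ⟨cs', j', hα⟩ := this
        exact Or.inr (Or.inl ⟨by omega, he1, cs', j', hα⟩)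

end Stmt6
namespace Stmt6
variable {n m : ℕ} {φ : Fin m → Finset (Fin n × Bool)}
  {ℓ : ℕ} {ρ : ℕ → (Fin (2*m+1+1) → PVert n m)}

/-- levels are non-decreasing in time at each position -/
lemma lev_time_mono (hρ : PReconfSeq n m φ ρ ℓ (pbP n m) (peP n m)) (hℓ : ℓ ≤ 2*m*(n+2))
    {t t' : ℕ} (htt' : t ≤ t') (ht'ℓ : t' ≤ ℓ) (pos : Fin (2*m+1+1)) :
    (ρ t pos).level ≤ (ρ t' pos).level := by
  induction t', htt' using Nat.le_induction with
  | base => exact le_rfl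
  | succ t' htt' ih =>
    refine le_trans (ih (by omega)) ?_
    by_cases hch : ρ (t'+1) pos = ρ t' pos
    · rw [hch]
    · obtain ⟨d, hdlt⟩ := pos
      exact (step_classify hρ hℓ (by omega) hdlt hch).1

/-- levels are non-increasing along positions of a path -/
lemma lev_pos_mono {p : Fin (2*m+1+1) → PVert n m} (hp : IsStPath n m φ p)
    {d d' : ℕ} (h1 : 1 ≤ d) (hdd' : d ≤ d') (h2 : d' ≤ 2*m)
    (hdlt : d < 2*m+1+1) (hd'lt : d' < 2*m+1+1) :
    (p ⟨d', hd'lt⟩).level ≤ (p ⟨d, hdlt⟩).level := by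
  induction d', hdd' using Nat.le_induction with
  | base => exact le_rfl
  | succ d' hdd' ih =>
    have hd'2 : d' < 2*m+1+1 := by omega
    have hedge : PEdge n m φ (p ⟨d', hd'2⟩) (p ⟨d'+1, hd'lt⟩) := path_edge hp d' (by omega)
    have ha : (p ⟨d', hd'2⟩).depth = d' := path_depth hp ⟨d', hd'2⟩
    have hb : (p ⟨d'+1, hd'lt⟩).depth = d'+1 := path_depth hp ⟨d'+1, hd'lt⟩
    have := L_lev (by omega) (by omega) hedge
    exact le_trans this (ih (by omega) hd'2)

/-- all gadget vertices at the same level seen up to time `t` share the same v-state -/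
def Agr (ρ : ℕ → (Fin (2*m+1+1) → PVert n m)) (t : ℕ) : Prop :=
  ∀ t' ≤ t, ∀ (p1 p2 : Fin (2*m+1+1)) (i1 i2 : Fin n) (vs1 vs2 cs1 cs2 : Bool)
    (j1 j2 : Fin (2*m)), ρ t' p1 = PVert.v i1 vs1 cs1 j1 → ρ t p2 = PVert.v i2 vs2 cs2 j2 →
    (i1:ℕ) = (i2:ℕ) → vs1 = vs2

lemma pbP_ne_v (d : Fin (2*m+1+1)) (i : Fin n) (vs cs : Bool) (j : Fin (2*m)) :
    pbP n m d ≠ PVert.v i vs cs j := by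
  unfold pbP; split_ifs <;> simp

lemma agr_zero (hρ : PReconfSeq n m φ ρ ℓ (pbP n m) (peP n m)) : Agr ρ 0 := by
  intro t' ht' p1 p2 i1 i2 vs1 vs2 cs1 cs2 j1 j2 h1 h2 hi
  exfalso
  interval_cases t'
  rw [hρ.1] at h2
  exact pbP_ne_v p2 i2 vs2 cs2 j2 h2

lemma agr_succ (hρ : PReconfSeq n m φ ρ ℓ (pbP n m) (peP n m)) (hℓ : ℓ ≤ 2*m*(n+2))
    {t : ℕ} (ht : t < ℓ) (hA : Agr ρ t) : Agr ρ (t+1) := by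
  -- key: a changed position agrees with everything before
  have key : ∀ (p2 : Fin (2*m+1+1)) (i : Fin n) (vs cs : Bool) (j : Fin (2*m)),
      ρ (t+1) p2 = PVert.v i vs cs j → ρ (t+1) p2 ≠ ρ t p2 →
      ∀ t' ≤ t, ∀ (p1 : Fin (2*m+1+1)) (i1 : Fin n) (vs1 cs1 : Bool) (j1 : Fin (2*m)),
      ρ t' p1 = PVert.v i1 vs1 cs1 j1 → (i1:ℕ) = (i:ℕ) → vs1 = vs := by
    intro p2 i vs cs j hb hne t' ht' p1 i1 vs1 cs1 j1 h1 hi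
    obtain ⟨d, hdlt⟩ := p2
    have hc := step_classify hρ hℓ ht hdlt hne
    rcases hc.2.2 i vs cs j hb with ⟨cs', j', hA0⟩ | ⟨hd2, hd', cs', j', hA0⟩ | ⟨hd1, hlev⟩
    · exact hA t' ht' p1 ⟨d, hdlt⟩ i1 i vs1 vs cs1 cs' j1 j' h1 hA0 hi
    · exact hA t' ht' p1 ⟨d-1, hd'⟩ i1 i vs1 vs cs1 cs' j1 j' h1 hA0 hi
    · -- the fresh-level case: impossible since some level-(i+1) vertex was seen before
      exfalso
      have hp' := hρ.2.2.1 t' (by omega)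
      have hp := hρ.2.2.1 t (by omega)
      -- position p1 is in [1, 2m]
      have hdep : (ρ t' p1).depth = (p1:ℕ) := path_depth hp' p1
      have hdep2 : (PVert.v i1 vs1 cs1 j1).depth = (j1:ℕ)+1 := rfl
      have hp1range : 1 ≤ (p1:ℕ) ∧ (p1:ℕ) ≤ 2*m := by
        rw [h1, hdep2] at hdep
        constructor <;> omega
      -- level of p1 at time t' is i1+1 = i+1
      have hl1 : (ρ t' p1).level = (i:ℕ)+1 := by rw [h1, lev_v]; omega
      -- level at time t is at least i+1
      have hl2 : (i:ℕ)+1 ≤ (ρ t p1).level := by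
        rw [← hl1]
        exact lev_time_mono hρ hℓ ht' (by omega) p1
      -- but at time t, every position has level at most that of position 1 = d
      have hl3 : (ρ t p1).level ≤ (ρ t ⟨d, hdlt⟩).level := by
        have e : p1 = ⟨(p1:ℕ), p1.isLt⟩ := rfl
        rw [e]
        exact lev_pos_mono hp (by omega) (by omega) (by omega) hdlt p1.isLt
      -- and level of position d at time t is i
      have hl4 : (ρ (t+1) ⟨d, hdlt⟩).level = (i:ℕ)+1 := by rw [hb, lev_v]
      omega
  -- assemble
  intro t' ht' p1 p2 i1 i2 vs1 vs2 cs1 cs2 j1 j2 h1 h2 hi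
  by_cases hch2 : ρ (t+1) p2 = ρ t p2
  · rw [hch2] at h2
    rcases Nat.lt_or_ge t' (t+1) with ht'2 | ht'2
    · exact hA t' (by omega) p1 p2 i1 i2 vs1 vs2 cs1 cs2 j1 j2 h1 h2 hi
    · have : t' = t+1 := by omega
      subst this
      by_cases hch1 : ρ (t+1) p1 = ρ t p1
      · rw [hch1] at h1
        exact hA t le_rfl p1 p2 i1 i2 vs1 vs2 cs1 cs2 j1 j2 h1 h2 hi
      · exact (key p1 i1 vs1 cs1 j1 h1 hch1 t le_rfl p2 i2 vs2 cs2 j2 h2 hi.symm).symm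
  · rcases Nat.lt_or_ge t' (t+1) with ht'2 | ht'2
    · exact key p2 i2 vs2 cs2 j2 h2 hch2 t' (by omega) p1 i1 vs1 cs1 j1 h1 hi
    · have : t' = t+1 := by omega
      subst this
      by_cases hch1 : ρ (t+1) p1 = ρ t p1
      · rw [hch1] at h1
        exact key p2 i2 vs2 cs2 j2 h2 hch2 t le_rfl p1 i1 vs1 cs1 j1 h1 hi
      · -- both changed: same position
        obtain ⟨i0, hi0ne, hoth⟩ := hρ.2.2.2 t ht
        have e1 : p1 = i0 := by
          by_contra h; exact hch1 (hoth p1 h).symm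
        have e2 : p2 = i0 := by
          by_contra h; exact hch2 (hoth p2 h).symm
        subst e1; subst e2
        rw [h1] at h2
        simp only [PVert.v.injEq] at h2
        exact h2.2.1

lemma agr_all (hρ : PReconfSeq n m φ ρ ℓ (pbP n m) (peP n m)) (hℓ : ℓ ≤ 2*m*(n+2))
    {t : ℕ} (ht : t ≤ ℓ) : Agr ρ t := by
  induction t with
  | zero => exact agr_zero hρ
  | succ t ih => exact agr_succ hρ hℓ (by omega) (ih (by omega))

/-- visited v-states are consistent per level -/
lemma consistency (hρ : PReconfSeq n m φ ρ ℓ (pbP n m) (peP n m)) (hℓ : ℓ ≤ 2*m*(n+2))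
    {t1 t2 : ℕ} (h1ℓ : t1 ≤ ℓ) (h2ℓ : t2 ≤ ℓ) {p1 p2 : Fin (2*m+1+1)} {i : Fin n}
    {vs1 vs2 cs1 cs2 : Bool} {j1 j2 : Fin (2*m)}
    (h1 : ρ t1 p1 = PVert.v i vs1 cs1 j1) (h2 : ρ t2 p2 = PVert.v i vs2 cs2 j2) :
    vs1 = vs2 := by
  rcases le_total t1 t2 with h | h
  · exact agr_all hρ hℓ h2ℓ t1 h p1 p2 i i vs1 vs2 cs1 cs2 j1 j2 h1 h2 rfl
  · exact (agr_all hρ hℓ h1ℓ t2 h p2 p1 i i vs2 vs1 cs2 cs1 j2 j1 h2 h1 rfl).symm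

end Stmt6
namespace Stmt6
variable {n m : ℕ} {φ : Fin m → Finset (Fin n × Bool)}
  {ℓ : ℕ} {ρ : ℕ → (Fin (2*m+1+1) → PVert n m)}

/-- across column pair (2k+1, 2k+2), cstates agree unless a formula edge is present -/
lemma cst_pair {p : Fin (2*m+1+1) → PVert n m} (hp : IsStPath n m φ p) {k : ℕ} (hk : k < m)
    (ho : 2*k+1 < 2*m+1+1) (he : 2*k+2 < 2*m+1+1) :
    (p ⟨2*k+2, he⟩).cstate = (p ⟨2*k+1, ho⟩).cstate ∨
    (∃ (i : Fin n) (vs : Bool) (j j' : Fin (2*m)), (i,vs) ∈ φ ⟨k, hk⟩ ∧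
      p ⟨2*k+1, ho⟩ = PVert.v i vs true j ∧ p ⟨2*k+2, he⟩ = PVert.v i vs false j') := by
  have hedge : PEdge n m φ (p ⟨2*k+1, ho⟩) (p ⟨2*k+2, he⟩) := path_edge hp (2*k+1) (by omega)
  have ha : (p ⟨2*k+1, ho⟩).depth = 2*k+1 := path_depth hp ⟨2*k+1, ho⟩
  have hb : (p ⟨2*k+2, he⟩).depth = 2*k+2 := path_depth hp ⟨2*k+2, he⟩
  rcases L_odd (φ := φ) (k := k) (by omega) ha (by omega) hedge with h | h
  · exact Or.inl (sameC_cst h).symm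
  · rcases h with ⟨i,vs,j,j',hkm,hmem,h1,h2⟩|⟨ihi,ilo,vs1,vs2,cs1,j1,j1',hio,h1,h2⟩|
      ⟨j1,i1,vs1,j1',hin,h1,h2⟩|⟨i1,vs1,j1,j1',hi0,h1,h2⟩
    · exact Or.inr ⟨i, vs, j, j', hmem, h1, h2⟩
    · rw [h1, h2, cst_v, cst_v]; exact Or.inl rfl
    · rw [h1, h2, cst_v, cst_en]; exact Or.inl rfl
    · rw [h1, h2, cst_v, cst_beg]; exact Or.inl rfl

lemma pbP_cst (d : Fin (2*m+1+1)) (h1 : (d:ℕ) ≠ 0) (h2 : (d:ℕ) ≤ 2*m) :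
    (pbP n m d).cstate = 0 := by
  unfold pbP; rw [dif_neg h1, dif_pos h2]; rfl

lemma peP_cst (d : Fin (2*m+1+1)) (h1 : (d:ℕ) ≠ 0) (h2 : (d:ℕ) ≤ 2*m) :
    (peP n m d).cstate = 1 := by
  unfold peP; rw [dif_neg h1, dif_pos h2]; rfl

/-- each clause has a formula edge used at some time: a satisfied literal is visited -/
lemma clause_lemma (hρ : PReconfSeq n m φ ρ ℓ (pbP n m) (peP n m)) (hm : 1 ≤ m)
    (jc : Fin m) :
    ∃ t ≤ ℓ, ∃ (i : Fin n) (vs : Bool) (j : Fin (2*m)) (pos : Fin (2*m+1+1)),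
      (i,vs) ∈ φ jc ∧ ρ t pos = PVert.v i vs true j := by
  set k := (jc : ℕ) with hkdef
  have hk : k < m := jc.isLt
  have ho : 2*k+1 < 2*m+1+1 := by omega
  have he : 2*k+2 < 2*m+1+1 := by omega
  set o : Fin (2*m+1+1) := ⟨2*k+1, ho⟩ with hodef
  set e : Fin (2*m+1+1) := ⟨2*k+2, he⟩ with hedef
  have hc0 : (ρ 0 o).cstate = 0 := by
    rw [hρ.1]; exact pbP_cst o (by simp [hodef]) (by simp [hodef]; omega)
  have hcl : (ρ ℓ o).cstate = 1 := by
    rw [hρ.2.1]; exact peP_cst o (by simp [hodef]) (by simp [hodef]; omega)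
  -- find a step at which the cstate at position o changes
  have hex : ∃ t < ℓ, (ρ t o).cstate ≠ (ρ (t+1) o).cstate := by
    by_contra hcon
    push_neg at hcon
    have hconst : ∀ t ≤ ℓ, (ρ t o).cstate = 0 := by
      intro t htl
      induction t with
      | zero => exact hc0
      | succ t ih => rw [← hcon t (by omega)]; exact ih (by omega)
    have := hconst ℓ le_rfl
    omega
  obtain ⟨t, htℓ, hchg⟩ := hex
  -- position e is unchanged at this step
  have hnoe : ρ t e = ρ (t+1) e := by
    obtain ⟨i0, hi0ne, hoth⟩ := hρ.2.2.2 t htℓ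
    have hoo : o = i0 := by
      by_contra h
      exact hchg (congrArg PVert.cstate (hoth o h))
    apply hoth
    rw [← hoo]
    simp [hodef, hedef, Fin.ext_iff]
  have hp := hρ.2.2.1 t (by omega)
  have hq := hρ.2.2.1 (t+1) (by omega)
  have hfk : (⟨k, hk⟩ : Fin m) = jc := by apply Fin.ext; rfl
  rcases cst_pair (φ := φ) hp hk ho he with h1 | ⟨i, vs, j, j', hmem, hα, hβ⟩
  swap
  · exact ⟨t, by omega, i, vs, j, o, by rwa [hfk] at hmem, hα⟩
  rcases cst_pair (φ := φ) hq hk ho he with h2 | ⟨i, vs, j, j', hmem, hα, hβ⟩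
  swap
  · exact ⟨t+1, by omega, i, vs, j, o, by rwa [hfk] at hmem, hα⟩
  exfalso
  rw [← hnoe] at h2
  exact hchg (h1.symm.trans h2)

end Stmt6
/-- if there is a reconfiguration sequence from `p_b` to `p_e` in `G_φ` of
length at most `2m(n+2)`, then `φ` is satisfiable; indeed, any assignment `θ` giving each
variable `x_i` the common v-state of the level-`i` gadget vertices visited by the sequence
satisfies `φ`. -/
theorem stmt6 (n m : ℕ) (hn : 1 ≤ n) (hm : 1 ≤ m) (φ : Fin m → Finset (Fin n × Bool))
    (ℓ : ℕ) (hℓ : ℓ ≤ 2 * m * (n + 2))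
    (ρ : ℕ → (Fin (2 * m + 1 + 1) → PVert n m))
    (hρ : PReconfSeq n m φ ρ ℓ (pbP n m) (peP n m)) :
    (∃ θ : Fin n → Bool, ∀ jc : Fin m, ∃ i : Fin n, (i, θ i) ∈ φ jc) ∧
    (∀ θ : Fin n → Bool,
      (∀ (i : Fin n) (vs cs : Bool) (j : Fin (2 * m)),
        (∃ step ≤ ℓ, ∃ pos : Fin (2 * m + 1 + 1), ρ step pos = PVert.v i vs cs j) →
          θ i = vs) →
      ∀ jc : Fin m, ∃ i : Fin n, (i, θ i) ∈ φ jc) := by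
  classical
  have part2 : ∀ θ : Fin n → Bool,
      (∀ (i : Fin n) (vs cs : Bool) (j : Fin (2 * m)),
        (∃ step ≤ ℓ, ∃ pos : Fin (2 * m + 1 + 1), ρ step pos = PVert.v i vs cs j) →
          θ i = vs) →
      ∀ jc : Fin m, ∃ i : Fin n, (i, θ i) ∈ φ jc := by
    intro θ hθ jc
    obtain ⟨t, htℓ, i, vs, j, pos, hmem, hocc⟩ := Stmt6.clause_lemma hρ hm jc
    have hvs : θ i = vs := hθ i vs true j ⟨t, htℓ, pos, hocc⟩
    exact ⟨i, by rwa [hvs]⟩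
  refine ⟨?_, part2⟩
  -- construct a consistent assignment from the visited v-states
  set θ : Fin n → Bool := fun i =>
    if (∃ t ≤ ℓ, ∃ (pos : Fin (2*m+1+1)) (cs : Bool) (j : Fin (2*m)),
        ρ t pos = PVert.v i true cs j) then true else false with hθdef
  refine ⟨θ, part2 θ ?_⟩
  intro i vs cs j ⟨t, htℓ, pos, hocc⟩
  cases vs with
  | true =>
    show (if _ then true else false) = true
    rw [if_pos ⟨t, htℓ, pos, cs, j, hocc⟩]
  | false =>
    show (if _ then true else false) = false
    rw [if_neg]
    rintro ⟨t2, ht2ℓ, pos2, cs2, j2, hocc2⟩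
    exact Bool.noConfusion (Stmt6.consistency hρ hℓ htℓ ht2ℓ hocc hocc2)
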